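/- arXiv:1306.3650 — 2 statements merged into one kernel-verified Lean document; each statement's English description precedes it below -/
import Mathlib

section
/- Let D be an integral domain with quotient field K, let ⋆ be a semistar operation of D, and let T be an overring of D such that T^⋆ = T. Then the map A ↦ A^{▲^⋆_T} is a semistar operation of D[X]; that is, for every nonzero α ∈ K(X) and all A, B ∈ F̄(D[X]): (αA)^{▲^⋆_T} = α·A^{▲^⋆_T}; A ⊆ B implies A^{▲^⋆_T} ⊆ B^{▲^⋆_T}; and A ⊆ A^{▲^⋆_T} and (A^{▲^⋆_T})^{▲^⋆_T} = A^{▲^⋆_T}. -/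
/- Preliminaries: semistar operations on an integral domain `R` with quotient field `F`
(submodules of `F` over `R`), polynomial extension of semistar operations from `D`
to `D[X]` (viewed inside the quotient field `K(X) = RatFunc K` of `D[X]`). -/

open Polynomial Pointwise

set_option synthInstance.maxHeartbeats 1000000
set_option maxHeartbeats 1000000
set_option maxHeartbeats 2000000

open scoped Classical

noncomputable section

section Generic

variable (R F : Type*) [CommRing R] [Field F] [Algebra R F]

/-- `o` is a semistar operation of `R` (on the nonzero `R`-submodules of the
quotient field `F`). -/
def IsSemistarOp (o : Submodule R F → Submodule R F) : Prop :=
  (∀ x : F, x ≠ 0 → ∀ E : Submodule R F, E ≠ ⊥ → o (x • E) = x • o E) ∧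
  (∀ E G : Submodule R F, E ≠ ⊥ → G ≠ ⊥ → E ≤ G → o E ≤ o G) ∧
  (∀ E : Submodule R F, E ≠ ⊥ → E ≤ o E) ∧
  (∀ E : Submodule R F, E ≠ ⊥ → o (o E) = o E)

/-- The finite-type operation `⋆_f` associated to `⋆`:
`E^{⋆_f} = ⋃ { G^⋆ : G nonzero finitely generated, G ⊆ E }`. -/
def finTypeFun (o : Submodule R F → Submodule R F) : Submodule R F → Submodule R F :=
  fun E => ⨆ (G : Submodule R F) (_ : G ≠ ⊥) (_ : G.FG) (_ : G ≤ E), o G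

/-- `⋆` is of finite type, i.e. `⋆ = ⋆_f`. -/
def IsFiniteTypeFun (o : Submodule R F → Submodule R F) : Prop :=
  ∀ E : Submodule R F, E ≠ ⊥ → o E = finTypeFun R F o E

/-- `⋆` is stable: `(E ∩ G)^⋆ = E^⋆ ∩ G^⋆`. -/
def IsStableFun (o : Submodule R F → Submodule R F) : Prop :=
  ∀ E G : Submodule R F, E ≠ ⊥ → G ≠ ⊥ → o (E ⊓ G) = o E ⊓ o G

/-- An ideal of `R` viewed as an `R`-submodule of `F`. -/
def idealSub (J : Ideal R) : Submodule R F := Submodule.map (Algebra.linearMap R F) J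

/-- `(E : J) = { x ∈ F : xJ ⊆ E }` for an ideal `J` of `R`. -/
def colonIdeal (E : Submodule R F) (J : Ideal R) : Submodule R F where
  carrier := { x : F | ∀ a ∈ J, a • x ∈ E }
  add_mem' := fun {x y} hx hy a ha => by
    simpa [smul_add] using E.add_mem (hx a ha) (hy a ha)
  zero_mem' := fun a _ => by simpa using E.zero_mem
  smul_mem' := fun r x hx a ha => by
    rw [← mul_smul, mul_comm, mul_smul]
    exact E.smul_mem r (hx a ha)

/-- The stable finite-type operation `tilde ⋆` associated to `⋆`:
`E^{tilde ⋆} = ⋃ { (E : J) : J nonzero finitely generated integral ideal with J^⋆ = R^⋆ }`. -/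
def tildeFun (o : Submodule R F → Submodule R F) : Submodule R F → Submodule R F :=
  fun E => ⨆ (J : Ideal R) (_ : J ≠ ⊥) (_ : J.FG)
    (_ : o (idealSub R F J) = o (1 : Submodule R F)), colonIdeal R F E J

/-- The `v`-operation: `E^v = (R : (R : E))` for `E` a nonzero fractional ideal,
and `E^v = F` otherwise. -/
def vFun : Submodule R F → Submodule R F := fun E =>
  if ∃ d : R, d ≠ 0 ∧ ∀ x ∈ E, d • x ∈ (1 : Submodule R F) then
    (1 : Submodule R F) / ((1 : Submodule R F) / E)
  else ⊤

/-- The `eab` operation `⋆_a` associated to `⋆`. -/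
def aFun (o : Submodule R F → Submodule R F) : Submodule R F → Submodule R F := fun E =>
  ⨆ (G : Submodule R F) (_ : G ≠ ⊥) (_ : G.FG) (_ : G ≤ E),
    ⨆ (H : Submodule R F) (_ : H ≠ ⊥) (_ : H.FG), o (G * H) / o H

/-- `I` is a quasi-`⋆`-ideal: a nonzero integral ideal with `I^⋆ ∩ R = I`. -/
def isQuasiIdealFun (o : Submodule R F → Submodule R F) (I : Ideal R) : Prop :=
  I ≠ ⊥ ∧ (o (idealSub R F I)).comap (Algebra.linearMap R F) = I

/-- `I` is a quasi-`⋆`-maximal ideal: maximal among proper quasi-`⋆`-ideals. -/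
def isQuasiMaximalFun (o : Submodule R F → Submodule R F) (I : Ideal R) : Prop :=
  isQuasiIdealFun R F o I ∧ I ≠ ⊤ ∧
    ∀ J : Ideal R, isQuasiIdealFun R F o J → J ≠ ⊤ → I ≤ J → I = J

/-- The `v`-operation relative to an overring `R'` (an `R`-submodule of `F`):
`B ↦ (R' : (R' : B))` for `B` a nonzero fractional ideal of `R'`, `F` otherwise. -/
def vRelFun (R' B : Submodule R F) : Submodule R F :=
  if ∃ z ∈ R', z ≠ 0 ∧ ∀ x ∈ B, z * x ∈ R' then R' / (R' / B) else ⊤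

/-- The `t`-operation relative to an overring `R'`: finite-type operation associated to
the `v`-operation of `R'` (the union being over nonzero finitely generated
`R'`-submodules contained in `B`). -/
def tRelFun (R' B : Submodule R F) : Submodule R F :=
  ⨆ (G : Submodule R F) (_ : G ≠ ⊥)
    (_ : ∃ S : Finset F, G = R' * Submodule.span R (S : Set F)) (_ : G ≤ B),
    vRelFun R F R' G

end Generic

section Poly

variable (D K : Type*) [CommRing D] [IsDomain D] [Field K] [Algebra D K] [IsFractionRing D K]

/-- The canonical ring homomorphism `D[X] → K(X)`. -/
def polyToRF : Polynomial D →+* RatFunc K :=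
  (algebraMap (Polynomial K) (RatFunc K)).comp (Polynomial.mapRingHom (algebraMap D K))

/-- `K(X)` is an algebra over `D[X]`; in fact it is the quotient field of `D[X]`. -/
instance (priority := 100) : Algebra (Polynomial D) (RatFunc K) := (polyToRF D K).toAlgebra

/-- For a `D`-submodule `E` of `K`, the `D[X]`-submodule `E[X]` of `K(X)`:
polynomials all of whose coefficients lie in `E`. -/
def polyExt (E : Submodule D K) : Submodule (Polynomial D) (RatFunc K) where
  carrier := { f : RatFunc K | ∃ p : Polynomial K, (∀ n, p.coeff n ∈ E) ∧
      f = algebraMap (Polynomial K) (RatFunc K) p }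
  add_mem' := by
    rintro f g ⟨p, hp, rfl⟩ ⟨q, hq, rfl⟩
    exact ⟨p + q, fun n => by simpa using E.add_mem (hp n) (hq n), by simp⟩
  zero_mem' := ⟨0, fun n => by simpa using E.zero_mem, by simp⟩
  smul_mem' := by
    rintro c f ⟨p, hp, rfl⟩
    refine ⟨Polynomial.map (algebraMap D K) c * p, fun n => ?_, ?_⟩
    · rw [Polynomial.coeff_mul]
      refine Submodule.sum_mem E fun ij _ => ?_
      rw [Polynomial.coeff_map, ← Algebra.smul_def]
      exact E.smul_mem _ (hp ij.2)
    · rw [Algebra.smul_def, RingHom.algebraMap_toAlgebra, map_mul]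
      unfold polyToRF
      simp

/-- The contraction `B ∩ K` of a `D[X]`-submodule `B` of `K(X)` to a `D`-submodule of `K`. -/
def contractToBase (B : Submodule (Polynomial D) (RatFunc K)) : Submodule D K where
  carrier := { x : K | algebraMap K (RatFunc K) x ∈ B }
  add_mem' := fun {x y} hx hy => by
    simpa [Set.mem_setOf_eq, map_add] using B.add_mem hx hy
  zero_mem' := by simpa using B.zero_mem
  smul_mem' := fun d x hx => by
    have h : algebraMap K (RatFunc K) (d • x)
        = (Polynomial.C d : Polynomial D) • (algebraMap K (RatFunc K) x) := by
      rw [Algebra.smul_def d x, map_mul, Algebra.smul_def, RingHom.algebraMap_toAlgebra]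
      unfold polyToRF
      simp only [RingHom.coe_comp, Function.comp_apply, Polynomial.coe_mapRingHom,
        Polynomial.map_C, RatFunc.algebraMap_C, RatFunc.algebraMap_eq_C]
    show algebraMap K (RatFunc K) (d • x) ∈ B
    rw [h]
    exact B.smul_mem (Polynomial.C d) hx

/-- The content `c_D(S)`: the `D`-submodule of `K` generated by the coefficients of all
polynomials belonging to `S`. -/
def contentOf (S : Set (RatFunc K)) : Submodule D K :=
  Submodule.span D { x : K | ∃ p : Polynomial K,
    algebraMap (Polynomial K) (RatFunc K) p ∈ S ∧ ∃ n, p.coeff n = x }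

/-- The semistar operation `▲^⋆_T` of `D[X]` associated to a semistar operation `⋆` of `D`
and an overring `T` of `D`:
`A ↦ ⋂ { z⁻¹ (c_D(zA))^⋆[X] : z ∈ (T[X] : A), z ≠ 0 }` if `(T[X] : A) ≠ 0`, else `A ↦ K(X)`. -/
def bigTriT (o : Submodule D K → Submodule D K) (T : Subalgebra D K) :
    Submodule (Polynomial D) (RatFunc K) → Submodule (Polynomial D) (RatFunc K) := fun A =>
  if ∃ z : RatFunc K, z ≠ 0 ∧ ∀ a ∈ A, z * a ∈ polyExt D K (Subalgebra.toSubmodule T) then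
    ⨅ (z : RatFunc K) (_ : z ≠ 0) (_ : ∀ a ∈ A, z * a ∈ polyExt D K (Subalgebra.toSubmodule T)),
      z⁻¹ • polyExt D K (o (contentOf D K (z • (A : Set (RatFunc K)))))
  else ⊤

/-- `▲^⋆ := ▲^⋆_K`, the largest strict extension of `⋆` to `D[X]`. -/
def bigTri (o : Submodule D K → Submodule D K) :
    Submodule (Polynomial D) (RatFunc K) → Submodule (Polynomial D) (RatFunc K) :=
  bigTriT D K o ⊤

/-- `b` is an extension of `⋆` to `D[X]` : `E^⋆ = (E[X])^b ∩ K`. -/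
def IsExtensionFun (o : Submodule D K → Submodule D K)
    (b : Submodule (Polynomial D) (RatFunc K) → Submodule (Polynomial D) (RatFunc K)) : Prop :=
  ∀ E : Submodule D K, E ≠ ⊥ → o E = contractToBase D K (b (polyExt D K E))

/-- `b` is a strict extension of `⋆` to `D[X]` : `(E[X])^b = E^⋆[X]`. -/
def IsStrictExtensionFun (o : Submodule D K → Submodule D K)
    (b : Submodule (Polynomial D) (RatFunc K) → Submodule (Polynomial D) (RatFunc K)) : Prop :=
  ∀ E : Submodule D K, E ≠ ⊥ → b (polyExt D K E) = polyExt D K (o E)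

/-- `⋏^⋆ : A ↦ ⋂ { A^★ : ★ a semistar operation of D[X] extending ⋆ }`. -/
def curlyFun (o : Submodule D K → Submodule D K) :
    Submodule (Polynomial D) (RatFunc K) → Submodule (Polynomial D) (RatFunc K) := fun A =>
  ⨅ (b : Submodule (Polynomial D) (RatFunc K) → Submodule (Polynomial D) (RatFunc K))
    (_ : IsSemistarOp (Polynomial D) (RatFunc K) b) (_ : IsExtensionFun D K o b), b A

/-- The localization `D_Q` of `D` at a prime ideal `Q`, as a `D`-submodule of `K`. -/
def locSub (Q : Ideal D) : Submodule D K :=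
  Submodule.span D { x : K | ∃ s : D, s ∉ Q ∧ s • x ∈ (1 : Submodule D K) }

/-- The content of an ideal `I` of `D[X]`: the `D`-submodule of `K` generated by the
coefficients of the polynomials in `I`. -/
def contentOfIdeal (I : Ideal (Polynomial D)) : Submodule D K :=
  Submodule.span D { x : K | ∃ p ∈ I, ∃ n, algebraMap D K (Polynomial.coeff p n) = x }

/-- The Nagata ring `D_Q(X)`, as a subset of `K(X)`: fractions `f/g` with
`f, g ∈ D_Q[X]` and the coefficients of `g` generating the unit ideal of `D_Q`. -/
def nagataSet (Q : Ideal D) : Set (RatFunc K) :=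
  { u : RatFunc K | ∃ g : Polynomial K, (∀ n, g.coeff n ∈ locSub D K Q) ∧
      locSub D K Q * Submodule.span D { x : K | ∃ n, g.coeff n = x } = locSub D K Q ∧
      u * algebraMap (Polynomial K) (RatFunc K) g ∈ polyExt D K (locSub D K Q) }

end Poly


section ProofAux

open Polynomial Pointwise

variable {D K : Type*} [CommRing D] [IsDomain D] [Field K] [Algebra D K] [IsFractionRing D K]

lemma mem_psmul {a : RatFunc K} {S : Submodule (Polynomial D) (RatFunc K)} {m : RatFunc K} :
    m ∈ a • S ↔ ∃ n ∈ S, a • n = m := by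
  rw [← SetLike.mem_coe, Submodule.coe_pointwise_smul]; exact Set.mem_smul_set

lemma psmul_mono {a : RatFunc K} {S S' : Submodule (Polynomial D) (RatFunc K)} (h : S ≤ S') :
    a • S ≤ a • S' := by
  intro m hm
  obtain ⟨n, hn, rfl⟩ := mem_psmul.1 hm
  exact Submodule.smul_mem_pointwise_smul n a S' (h hn)

lemma polyExt_mono {E F : Submodule D K} (h : E ≤ F) : polyExt D K E ≤ polyExt D K F := by
  rintro f ⟨p, hp, rfl⟩
  exact ⟨p, fun n => h (hp n), rfl⟩

lemma coeff_mem_contentOf {S : Set (RatFunc K)} {p : Polynomial K}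
    (hp : algebraMap (Polynomial K) (RatFunc K) p ∈ S) (n : ℕ) :
    p.coeff n ∈ contentOf D K S :=
  Submodule.subset_span ⟨p, hp, n, rfl⟩

lemma contentOf_mono {S S' : Set (RatFunc K)} (h : S ⊆ S') :
    contentOf D K S ≤ contentOf D K S' := by
  apply Submodule.span_mono
  rintro x ⟨p, hp, n, rfl⟩
  exact ⟨p, h hp, n, rfl⟩

lemma contentOf_le {A : Submodule (Polynomial D) (RatFunc K)} {z : RatFunc K}
    {E : Submodule D K} (h : ∀ a ∈ A, z * a ∈ polyExt D K E) :
    contentOf D K (z • (A : Set (RatFunc K))) ≤ E := by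
  apply Submodule.span_le.2
  rintro x ⟨p, hp, n, rfl⟩
  obtain ⟨a, ha, hza⟩ := Set.mem_smul_set.1 hp
  obtain ⟨q, hq, heq⟩ := h a ha
  have : p = q := RatFunc.algebraMap_injective K (by rw [← heq, ← hza, smul_eq_mul])
  exact this ▸ hq n

lemma mul_mem_polyExt_contentOf {A : Submodule (Polynomial D) (RatFunc K)} {z : RatFunc K}
    {E : Submodule D K} (h : ∀ a ∈ A, z * a ∈ polyExt D K E) {a : RatFunc K} (ha : a ∈ A) :
    z * a ∈ polyExt D K (contentOf D K (z • (A : Set (RatFunc K)))) := by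
  obtain ⟨p, hp, heq⟩ := h a ha
  refine ⟨p, fun n => coeff_mem_contentOf ?_ n, heq⟩
  rw [← heq]
  exact ⟨a, ha, by show z • a = z * a; rw [smul_eq_mul]⟩

lemma contentOf_ne_bot {A : Submodule (Polynomial D) (RatFunc K)} {z : RatFunc K}
    {E : Submodule D K} (hA : A ≠ ⊥) (hz : z ≠ 0)
    (h : ∀ a ∈ A, z * a ∈ polyExt D K E) :
    contentOf D K (z • (A : Set (RatFunc K))) ≠ ⊥ := by
  obtain ⟨a, ha, ha0⟩ := (Submodule.ne_bot_iff A).1 hA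
  obtain ⟨p, hp, heq⟩ := h a ha
  have hza : z * a ≠ 0 := mul_ne_zero hz ha0
  have hp0 : p ≠ 0 := by rintro rfl; rw [map_zero] at heq; exact hza heq
  obtain ⟨n, hn⟩ : ∃ n, p.coeff n ≠ 0 := by
    by_contra hc
    push_neg at hc
    exact hp0 (Polynomial.ext fun n => by rw [hc n, Polynomial.coeff_zero])
  refine (Submodule.ne_bot_iff _).2 ⟨p.coeff n, coeff_mem_contentOf ?_ n, hn⟩
  rw [← heq]
  exact ⟨a, ha, by show z • a = z * a; rw [smul_eq_mul]⟩

lemma toSubmodule_ne_bot (T : Subalgebra D K) : (Subalgebra.toSubmodule T : Submodule D K) ≠ ⊥ := by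
  refine (Submodule.ne_bot_iff _).2 ⟨1, ?_, one_ne_zero⟩
  exact T.one_mem

lemma not_top_cond (T : Subalgebra D K) :
    ¬ ∃ z : RatFunc K, z ≠ 0 ∧ ∀ a ∈ (⊤ : Submodule (Polynomial D) (RatFunc K)),
      z * a ∈ polyExt D K (Subalgebra.toSubmodule T) := by
  rintro ⟨z, hz, h⟩
  set u : RatFunc K := (algebraMap (Polynomial K) (RatFunc K) (Polynomial.X))⁻¹ with hu
  have hX : algebraMap (Polynomial K) (RatFunc K) (Polynomial.X) ≠ 0 := by
    intro hc
    exact Polynomial.X_ne_zero (RatFunc.algebraMap_injective K (by rw [hc, map_zero]))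
  obtain ⟨p, hp, heq⟩ := h (z⁻¹ * u) Submodule.mem_top
  have hzu : z * (z⁻¹ * u) = u := by field_simp
  rw [hzu] at heq
  have h1 : algebraMap (Polynomial K) (RatFunc K) (p * Polynomial.X) = 1 := by
    rw [map_mul, ← heq, hu, inv_mul_cancel₀ hX]
  have h2 : p * Polynomial.X = 1 := by
    apply RatFunc.algebraMap_injective K
    rw [h1, map_one]
  have := congrArg (Polynomial.eval 0) h2
  simp at this

end ProofAux

/- The theorem. -/

theorem bigTriT_isSemistarOp (D K : Type*) [CommRing D] [IsDomain D] [Field K] [Algebra D K] [IsFractionRing D K]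
    (star : Submodule D K → Submodule D K) (hstar : IsSemistarOp D K star)
    (T : Subalgebra D K)
    (hT : star (Subalgebra.toSubmodule T) = Subalgebra.toSubmodule T) :
    IsSemistarOp (Polynomial D) (RatFunc K) (bigTriT D K star T) := by
  classical
  obtain ⟨hhom, hmono, hle, hidem⟩ := hstar
  -- key: if z works for A then contentOf (z • A) ≤ T
  have hTne : (Subalgebra.toSubmodule T : Submodule D K) ≠ ⊥ := toSubmodule_ne_bot T
  -- property 3 : A ≤ A^b
  have prop3 : ∀ A : Submodule (Polynomial D) (RatFunc K), A ≠ ⊥ → A ≤ bigTriT D K star T A := by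
    intro A hA
    unfold bigTriT
    split_ifs with hc
    · refine le_iInf fun z => le_iInf fun hz => le_iInf fun h => fun a ha => ?_
      have h1 : z * a ∈ polyExt D K (contentOf D K (z • (A : Set (RatFunc K)))) :=
        mul_mem_polyExt_contentOf h ha
      have h2 : z * a ∈ polyExt D K (star (contentOf D K (z • (A : Set (RatFunc K))))) :=
        polyExt_mono (hle _ (contentOf_ne_bot hA hz h)) h1
      have h3 := Submodule.smul_mem_pointwise_smul _ z⁻¹ _ h2
      rwa [smul_eq_mul, ← mul_assoc, inv_mul_cancel₀ hz, one_mul] at h3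
    · exact le_top
  -- for z in the index of A, the star term bounds A^b
  have hle_term : ∀ (A : Submodule (Polynomial D) (RatFunc K)) (z : RatFunc K),
      z ≠ 0 → (∀ a ∈ A, z * a ∈ polyExt D K (Subalgebra.toSubmodule T)) →
      bigTriT D K star T A ≤ z⁻¹ • polyExt D K (star (contentOf D K (z • (A : Set (RatFunc K))))) := by
    intro A z hz h
    unfold bigTriT
    rw [if_pos ⟨z, hz, h⟩]
    exact iInf_le_of_le z (iInf_le_of_le hz (iInf_le _ h))
  -- index of A is contained in index of A^b
  have hindex : ∀ (A : Submodule (Polynomial D) (RatFunc K)), A ≠ ⊥ → ∀ (z : RatFunc K),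
      z ≠ 0 → (∀ a ∈ A, z * a ∈ polyExt D K (Subalgebra.toSubmodule T)) →
      (∀ a ∈ bigTriT D K star T A, z * a ∈ polyExt D K (Subalgebra.toSubmodule T)) := by
    intro A hA z hz h m hm
    have h1 := hle_term A z hz h hm
    obtain ⟨n, hn, rfl⟩ := mem_psmul.1 h1
    have h2 : star (contentOf D K (z • (A : Set (RatFunc K)))) ≤ Subalgebra.toSubmodule T := by
      rw [← hT]
      exact hmono _ _ (contentOf_ne_bot hA hz h) hTne (contentOf_le h)
    have h3 := polyExt_mono h2 hn
    rwa [smul_eq_mul, ← mul_assoc, mul_inv_cancel₀ hz, one_mul]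
  -- property 2 : monotone
  have prop2 : ∀ A B : Submodule (Polynomial D) (RatFunc K), A ≠ ⊥ → B ≠ ⊥ → A ≤ B →
      bigTriT D K star T A ≤ bigTriT D K star T B := by
    intro A B hA hB hAB
    by_cases hc : ∃ z : RatFunc K, z ≠ 0 ∧ ∀ b ∈ B, z * b ∈ polyExt D K (Subalgebra.toSubmodule T)
    · conv_rhs => rw [bigTriT, if_pos hc]
      refine le_iInf fun z => le_iInf fun hz => le_iInf fun h => ?_
      have hA' : ∀ a ∈ A, z * a ∈ polyExt D K (Subalgebra.toSubmodule T) :=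
        fun a ha => h a (hAB ha)
      refine le_trans (hle_term A z hz hA') (psmul_mono (polyExt_mono ?_))
      refine hmono _ _ (contentOf_ne_bot hA hz hA') (contentOf_ne_bot hB hz h) ?_
      exact contentOf_mono (Set.smul_set_mono hAB)
    · conv_rhs => rw [bigTriT, if_neg hc]
      exact le_top
  -- property 1 : homogeneity (one direction, then by symmetry)
  have key : ∀ (x : RatFunc K), x ≠ 0 → ∀ A : Submodule (Polynomial D) (RatFunc K), A ≠ ⊥ →
      x • bigTriT D K star T A ≤ bigTriT D K star T (x • A) := by
    intro x hx A hA
    by_cases hc : ∃ z : RatFunc K, z ≠ 0 ∧ ∀ a ∈ (x • A : Submodule (Polynomial D) (RatFunc K)),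
        z * a ∈ polyExt D K (Subalgebra.toSubmodule T)
    · conv_rhs => rw [bigTriT, if_pos hc]
      refine le_iInf fun z => le_iInf fun hz => le_iInf fun h => ?_
      have hzx : z * x ≠ 0 := mul_ne_zero hz hx
      have hA' : ∀ a ∈ A, (z * x) * a ∈ polyExt D K (Subalgebra.toSubmodule T) := by
        intro a ha
        have := h (x • a) (Submodule.smul_mem_pointwise_smul a x A ha)
        rwa [smul_eq_mul, ← mul_assoc] at this
      have hset : z • ((x • A : Submodule (Polynomial D) (RatFunc K)) : Set (RatFunc K))
          = (z * x) • (A : Set (RatFunc K)) := by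
        rw [Submodule.coe_pointwise_smul, smul_smul]
      intro m hm
      obtain ⟨n, hn, rfl⟩ := mem_psmul.1 hm
      have h1 := hle_term A (z * x) hzx hA' hn
      obtain ⟨w, hw, rfl⟩ := mem_psmul.1 h1
      rw [hset]
      have : x • (z * x)⁻¹ • w = z⁻¹ • w := by
        rw [smul_smul, mul_inv, smul_eq_mul, smul_eq_mul]
        field_simp
      rw [this]
      exact Submodule.smul_mem_pointwise_smul w z⁻¹ _ hw
    · conv_rhs => rw [bigTriT, if_neg hc]
      exact le_top
  have smul_ne_bot : ∀ (x : RatFunc K), x ≠ 0 → ∀ A : Submodule (Polynomial D) (RatFunc K),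
      A ≠ ⊥ → (x • A : Submodule (Polynomial D) (RatFunc K)) ≠ ⊥ := by
    intro x hx A hA
    obtain ⟨a, ha, ha0⟩ := (Submodule.ne_bot_iff A).1 hA
    refine (Submodule.ne_bot_iff _).2 ⟨x • a, Submodule.smul_mem_pointwise_smul a x A ha, ?_⟩
    simp only [smul_eq_mul]
    exact mul_ne_zero hx ha0
  have prop1 : ∀ (x : RatFunc K), x ≠ 0 → ∀ A : Submodule (Polynomial D) (RatFunc K), A ≠ ⊥ →
      bigTriT D K star T (x • A) = x • bigTriT D K star T A := by
    intro x hx A hA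
    refine le_antisymm ?_ (key x hx A hA)
    have h2 := key x⁻¹ (inv_ne_zero hx) (x • A) (smul_ne_bot x hx A hA)
    have h3 : (x⁻¹ • (x • A) : Submodule (Polynomial D) (RatFunc K)) = A := by
      rw [smul_smul, inv_mul_cancel₀ hx, one_smul]
    rw [h3] at h2
    have h4 := psmul_mono (a := x) h2
    rwa [smul_smul, mul_inv_cancel₀ hx, one_smul] at h4
  refine ⟨prop1, prop2, prop3, ?_⟩
  -- property 4 : idempotent
  intro A hA
  have hAb : bigTriT D K star T A ≠ ⊥ := by
    intro hc
    exact hA (le_bot_iff.1 (hc ▸ prop3 A hA))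
  refine le_antisymm ?_ (prop3 _ hAb)
  by_cases hc : ∃ z : RatFunc K, z ≠ 0 ∧ ∀ a ∈ A, z * a ∈ polyExt D K (Subalgebra.toSubmodule T)
  · conv_rhs => rw [bigTriT, if_pos hc]
    refine le_iInf fun z => le_iInf fun hz => le_iInf fun h => ?_
    have hidx := hindex A hA z hz h
    refine le_trans (hle_term _ z hz hidx) (psmul_mono (polyExt_mono ?_))
    have hbot1 : contentOf D K (z • (A : Set (RatFunc K))) ≠ ⊥ := contentOf_ne_bot hA hz h
    have hA'' : ∀ a ∈ bigTriT D K star T A, z * a ∈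
        polyExt D K (star (contentOf D K (z • (A : Set (RatFunc K))))) := by
      intro m hm
      have h1 := hle_term A z hz h hm
      obtain ⟨n, hn, rfl⟩ := mem_psmul.1 h1
      rwa [smul_eq_mul, ← mul_assoc, mul_inv_cancel₀ hz, one_mul]
    have hsub : contentOf D K (z • ((bigTriT D K star T A : Submodule (Polynomial D) (RatFunc K)) :
        Set (RatFunc K))) ≤ star (contentOf D K (z • (A : Set (RatFunc K)))) :=
      contentOf_le hA''
    have hbot2 : contentOf D K (z • ((bigTriT D K star T A : Submodule (Polynomial D) (RatFunc K)) :
        Set (RatFunc K))) ≠ ⊥ := contentOf_ne_bot hAb hz hidx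
    have hbot3 : star (contentOf D K (z • (A : Set (RatFunc K)))) ≠ ⊥ := by
      intro hc'
      exact hbot1 (le_bot_iff.1 (hc' ▸ hle _ hbot1))
    calc star (contentOf D K (z • ((bigTriT D K star T A : Submodule (Polynomial D) (RatFunc K)) :
            Set (RatFunc K))))
        ≤ star (star (contentOf D K (z • (A : Set (RatFunc K))))) := hmono _ _ hbot2 hbot3 hsub
      _ = star (contentOf D K (z • (A : Set (RatFunc K)))) := hidem _ hbot1
  · have hAtop : bigTriT D K star T A = ⊤ := by rw [bigTriT, if_neg hc]
    rw [hAtop]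
    exact le_top
end
end

section
/- Let D be an integral domain with quotient field K. For every semistar operation ⋆ of D, the semistar operation ▲^⋆ of D[X] is not of finite type; that is, (▲^⋆)_f ⪇ ▲^⋆. In fact, for A := ⋃_{n≥1} X^{-n}·D[X] ∈ F̄(D[X]), one has A^{(▲^⋆)_f} ⊆ K[X, X^{-1}] ⊊ K(X) = A^{▲^⋆}. -/
/- Preliminaries: semistar operations on an integral domain `R` with quotient field `F`
(submodules of `F` over `R`), polynomial extension of semistar operations from `D`
to `D[X]` (viewed inside the quotient field `K(X) = RatFunc K` of `D[X]`). -/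

open Polynomial Pointwise

set_option synthInstance.maxHeartbeats 1000000
set_option maxHeartbeats 1000000

open scoped Classical

noncomputable section

section MyHelpers

variable {D K : Type*} [CommRing D] [IsDomain D] [Field K] [Algebra D K] [IsFractionRing D K]

lemma my_mem_psmul {a x : RatFunc K} {S : Submodule (Polynomial D) (RatFunc K)} :
    x ∈ a • S ↔ ∃ b ∈ S, a * b = x := by
  constructor
  · rintro ⟨b, hb, rfl⟩; exact ⟨b, hb, rfl⟩
  · rintro ⟨b, hb, rfl⟩; exact ⟨b, hb, rfl⟩

lemma my_psmul_mono (a : RatFunc K) {S T : Submodule (Polynomial D) (RatFunc K)} (h : S ≤ T) :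
    a • S ≤ a • T :=
  Submodule.map_mono h

lemma my_polyExt_mono {E E' : Submodule D K} (h : E ≤ E') : polyExt D K E ≤ polyExt D K E' := by
  rintro f ⟨p, hp, rfl⟩
  exact ⟨p, fun n => h (hp n), rfl⟩

lemma my_mem_polyExt_of {E : Submodule D K} (hE : ∀ x : K, x ∈ E) (p : Polynomial K) :
    algebraMap (Polynomial K) (RatFunc K) p ∈ polyExt D K E :=
  ⟨p, fun n => hE _, rfl⟩

lemma my_polyExt_elim {E : Submodule D K} {f : RatFunc K} (hf : f ∈ polyExt D K E) :
    ∃ p : Polynomial K, f = algebraMap (Polynomial K) (RatFunc K) p := by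
  obtain ⟨p, -, h⟩ := hf; exact ⟨p, h⟩

lemma my_one_mem_polyExt {E : Submodule D K} (hE : ∀ x : K, x ∈ E)
    {b : RatFunc K} (hb : b ∈ (1 : Submodule (Polynomial D) (RatFunc K))) :
    b ∈ polyExt D K E := by
  obtain ⟨q, rfl⟩ := Submodule.mem_one.mp hb
  rw [RingHom.algebraMap_toAlgebra (polyToRF D K)]
  exact my_mem_polyExt_of hE _

lemma my_X_mul_mem_one {b : RatFunc K} (hb : b ∈ (1 : Submodule (Polynomial D) (RatFunc K))) :
    (RatFunc.X : RatFunc K) * b ∈ (1 : Submodule (Polynomial D) (RatFunc K)) := by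
  obtain ⟨q, rfl⟩ := Submodule.mem_one.mp hb
  refine Submodule.mem_one.mpr ⟨Polynomial.X * q, ?_⟩
  rw [RingHom.algebraMap_toAlgebra (polyToRF D K), map_mul]
  congr 1
  unfold polyToRF
  simp [RatFunc.algebraMap_X]

lemma my_contentOf_mono {s t : Set (RatFunc K)} (h : s ⊆ t) :
    contentOf D K s ≤ contentOf D K t := by
  apply Submodule.span_mono
  rintro x ⟨p, hp, hn⟩
  exact ⟨p, h hp, hn⟩

lemma my_contentOf_ne_bot {G : Submodule (Polynomial D) (RatFunc K)} {z : RatFunc K}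
    {E : Submodule D K} (hG : G ≠ ⊥) (hz0 : z ≠ 0)
    (hz : ∀ a ∈ G, z * a ∈ polyExt D K E) :
    contentOf D K (z • (G : Set (RatFunc K))) ≠ ⊥ := by
  obtain ⟨a, haG, ha0⟩ := Submodule.exists_mem_ne_zero_of_ne_bot hG
  obtain ⟨p, hp, heq⟩ := hz a haG
  have hza : z * a ≠ 0 := mul_ne_zero hz0 ha0
  have hpne : p ≠ 0 := by rintro rfl; rw [map_zero] at heq; exact hza heq
  obtain ⟨n, hn⟩ : ∃ n, p.coeff n ≠ 0 := by
    by_contra h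
    push_neg at h
    exact hpne (Polynomial.ext fun n => by simp [h n])
  have hx : p.coeff n ∈ contentOf D K (z • (G : Set (RatFunc K))) := by
    apply Submodule.subset_span
    refine ⟨p, ?_, n, rfl⟩
    rw [← heq]
    exact Set.smul_mem_smul_set haG
  intro hbot
  rw [hbot, Submodule.mem_bot] at hx
  exact hn hx

lemma my_bigTri_le_aux (star : Submodule D K → Submodule D K)
    {A : Submodule (Polynomial D) (RatFunc K)} {z : RatFunc K} (hz0 : z ≠ 0)
    (hz : ∀ a ∈ A, z * a ∈ polyExt D K (Subalgebra.toSubmodule (⊤ : Subalgebra D K))) :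
    bigTri D K star A ≤
      z⁻¹ • polyExt D K (star (contentOf D K (z • (A : Set (RatFunc K))))) := by
  rw [bigTri, bigTriT, if_pos ⟨z, hz0, hz⟩]
  exact le_trans (iInf_le _ z) (le_trans (iInf_le _ hz0) (iInf_le _ hz))

lemma my_bigTri_eq_top (star : Submodule D K → Submodule D K)
    {A : Submodule (Polynomial D) (RatFunc K)}
    (h : ¬ ∃ z : RatFunc K, z ≠ 0 ∧
      ∀ a ∈ A, z * a ∈ polyExt D K (Subalgebra.toSubmodule (⊤ : Subalgebra D K))) :
    bigTri D K star A = ⊤ := by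
  rw [bigTri, bigTriT, if_neg h]

lemma my_bigTri_mono (star : Submodule D K → Submodule D K) (hstar : IsSemistarOp D K star)
    {G B : Submodule (Polynomial D) (RatFunc K)} (hG : G ≠ ⊥) (hGB : G ≤ B) :
    bigTri D K star G ≤ bigTri D K star B := by
  by_cases hB : ∃ z : RatFunc K, z ≠ 0 ∧
      ∀ a ∈ B, z * a ∈ polyExt D K (Subalgebra.toSubmodule (⊤ : Subalgebra D K))
  · conv_rhs => rw [bigTri, bigTriT, if_pos hB]
    refine le_iInf fun z => le_iInf fun hz0 => le_iInf fun hzB => ?_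
    have hzG : ∀ a ∈ G, z * a ∈ polyExt D K (Subalgebra.toSubmodule (⊤ : Subalgebra D K)) :=
      fun a ha => hzB a (hGB ha)
    refine le_trans (my_bigTri_le_aux star hz0 hzG) ?_
    have h1 : contentOf D K (z • (G : Set (RatFunc K))) ≤
        contentOf D K (z • (B : Set (RatFunc K))) :=
      my_contentOf_mono (Set.smul_set_mono hGB)
    have hGne := my_contentOf_ne_bot hG hz0 hzG
    have hBne : contentOf D K (z • (B : Set (RatFunc K))) ≠ ⊥ :=
      fun hb => hGne (le_bot_iff.mp (hb ▸ h1))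
    exact my_psmul_mono _ (my_polyExt_mono (hstar.2.1 _ _ hGne hBne h1))
  · rw [my_bigTri_eq_top star hB]
    exact le_top

end MyHelpers

/- The theorem. -/

theorem bigTri_not_finite_type (D K : Type*) [CommRing D] [IsDomain D] [Field K] [Algebra D K] [IsFractionRing D K]
    (star : Submodule D K → Submodule D K) (hstar : IsSemistarOp D K star) :
    (∀ B : Submodule (Polynomial D) (RatFunc K), B ≠ ⊥ →
      finTypeFun (Polynomial D) (RatFunc K) (bigTri D K star) B ≤ bigTri D K star B) ∧
    (¬ ∀ B : Submodule (Polynomial D) (RatFunc K), B ≠ ⊥ →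
      finTypeFun (Polynomial D) (RatFunc K) (bigTri D K star) B = bigTri D K star B) ∧
    ∀ A L : Submodule (Polynomial D) (RatFunc K),
      A = (⨆ n : ℕ, ((RatFunc.X : RatFunc K)⁻¹ ^ (n + 1)) •
            (1 : Submodule (Polynomial D) (RatFunc K))) →
      L = (⨆ n : ℕ, ((RatFunc.X : RatFunc K)⁻¹ ^ n) • polyExt D K (⊤ : Submodule D K)) →
      finTypeFun (Polynomial D) (RatFunc K) (bigTri D K star) A ≤ L ∧ L < ⊤ ∧
        bigTri D K star A = ⊤ := by
  have hXne : (RatFunc.X : RatFunc K) ≠ 0 := RatFunc.X_ne_zero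
  have inj := RatFunc.algebraMap_injective K
  set f : ℕ → Submodule (Polynomial D) (RatFunc K) :=
    fun n => ((RatFunc.X : RatFunc K)⁻¹ ^ (n + 1)) • (1 : Submodule (Polynomial D) (RatFunc K))
    with hf
  set g : ℕ → Submodule (Polynomial D) (RatFunc K) :=
    fun n => ((RatFunc.X : RatFunc K)⁻¹ ^ n) • polyExt D K (⊤ : Submodule D K) with hg
  have hfmono : Monotone f := by
    apply monotone_nat_of_le_succ
    intro n x hx
    obtain ⟨b, hb, rfl⟩ := my_mem_psmul.mp hx
    refine my_mem_psmul.mpr ⟨RatFunc.X * b, my_X_mul_mem_one hb, ?_⟩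
    rw [pow_succ]
    rw [mul_assoc, ← mul_assoc (RatFunc.X⁻¹ : RatFunc K), inv_mul_cancel₀ hXne, one_mul]
  have hgmono : Monotone g := by
    apply monotone_nat_of_le_succ
    intro n x hx
    obtain ⟨b, hb, rfl⟩ := my_mem_psmul.mp hx
    obtain ⟨p, -, rfl⟩ := hb
    refine my_mem_psmul.mpr ⟨RatFunc.X * algebraMap (Polynomial K) (RatFunc K) p, ?_, ?_⟩
    · rw [← RatFunc.algebraMap_X, ← map_mul]
      exact my_mem_polyExt_of (fun x => Submodule.mem_top) _
    · rw [pow_succ]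
      rw [mul_assoc, ← mul_assoc (RatFunc.X⁻¹ : RatFunc K), inv_mul_cancel₀ hXne, one_mul]
  have hA1 : ∀ n : ℕ, ((RatFunc.X : RatFunc K)⁻¹) ^ (n + 1) ∈ ⨆ m, f m := by
    intro n
    refine le_iSup f n ?_
    exact my_mem_psmul.mpr ⟨1, Submodule.mem_one.mpr ⟨1, map_one _⟩, mul_one _⟩
  have main : ∀ A L : Submodule (Polynomial D) (RatFunc K),
      A = (⨆ n : ℕ, ((RatFunc.X : RatFunc K)⁻¹ ^ (n + 1)) •
            (1 : Submodule (Polynomial D) (RatFunc K))) →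
      L = (⨆ n : ℕ, ((RatFunc.X : RatFunc K)⁻¹ ^ n) • polyExt D K (⊤ : Submodule D K)) →
      finTypeFun (Polynomial D) (RatFunc K) (bigTri D K star) A ≤ L ∧ L < ⊤ ∧
        bigTri D K star A = ⊤ := by
    rintro A L rfl rfl
    refine ⟨?_, ?_, ?_⟩
    · -- finTypeFun ≤ L
      refine iSup_le fun G => iSup_le fun hG => iSup_le fun hfg => iSup_le fun hGA => ?_
      obtain ⟨S, rfl⟩ := hfg
      classical
      set N := S.sup (fun s => if h : ∃ n, s ∈ f n then Nat.find h else 0) with hN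
      have hSN : ∀ s ∈ (S : Set (RatFunc K)), s ∈ f N := by
        intro s hs
        have h : ∃ n, s ∈ f n :=
          (Submodule.mem_iSup_of_directed f hfmono.directed_le).mp
            (hGA (Submodule.subset_span hs))
        have hle : (if h : ∃ n, s ∈ f n then Nat.find h else 0) ≤ N :=
          Finset.le_sup (f := fun s => if h : ∃ n, s ∈ f n then Nat.find h else 0)
            (Finset.mem_coe.mp hs)
        rw [dif_pos h] at hle
        exact hfmono hle (Nat.find_spec h)
      have hGle : Submodule.span (Polynomial D) (S : Set (RatFunc K)) ≤ f N :=
        Submodule.span_le.mpr hSN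
      have hzne : (RatFunc.X : RatFunc K) ^ (N + 1) ≠ 0 := pow_ne_zero _ hXne
      have hz : ∀ a ∈ Submodule.span (Polynomial D) (S : Set (RatFunc K)),
          (RatFunc.X : RatFunc K) ^ (N + 1) * a ∈
            polyExt D K (Subalgebra.toSubmodule (⊤ : Subalgebra D K)) := by
        intro a ha
        obtain ⟨b, hb, rfl⟩ := my_mem_psmul.mp (hGle ha)
        have he : (RatFunc.X : RatFunc K) ^ (N + 1) * ((RatFunc.X : RatFunc K)⁻¹ ^ (N + 1) * b)
            = b := by
          rw [inv_pow, ← mul_assoc, mul_inv_cancel₀ hzne, one_mul]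
        rw [he]
        exact my_one_mem_polyExt (fun x => Submodule.mem_top) hb
      refine le_trans (my_bigTri_le_aux star hzne hz) ?_
      refine le_trans (my_psmul_mono _ (my_polyExt_mono le_top)) ?_
      have : ((RatFunc.X : RatFunc K) ^ (N + 1))⁻¹ • polyExt D K (⊤ : Submodule D K)
          = g (N + 1) := by
        show _ = (RatFunc.X : RatFunc K)⁻¹ ^ (N + 1) • polyExt D K (⊤ : Submodule D K)
        rw [inv_pow]
      rw [this]
      exact le_iSup g (N + 1)
    · -- L < ⊤
      rw [lt_top_iff_ne_top]
      intro hLtop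
      have hXadd : (RatFunc.X : RatFunc K) + 1 ≠ 0 := by
        rw [← RatFunc.algebraMap_X, ← map_one (algebraMap (Polynomial K) (RatFunc K)), ← map_add]
        rw [map_ne_zero_iff _ inj]
        intro h
        have := congrArg (fun q => Polynomial.coeff q 0) h
        simp at this
      have hu : ((RatFunc.X : RatFunc K) + 1)⁻¹ ∈ ⨆ n, g n := hLtop ▸ Submodule.mem_top
      obtain ⟨n, hn⟩ := (Submodule.mem_iSup_of_directed g hgmono.directed_le).mp hu
      obtain ⟨b, hb, hbe⟩ := my_mem_psmul.mp hn
      obtain ⟨q, rfl⟩ := my_polyExt_elim hb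
      have e1 : (RatFunc.X : RatFunc K) ^ n * (RatFunc.X : RatFunc K)⁻¹ ^ n = 1 := by
        rw [inv_pow, mul_inv_cancel₀ (pow_ne_zero n hXne)]
      have h2 : algebraMap (Polynomial K) (RatFunc K) q
          = RatFunc.X ^ n * ((RatFunc.X : RatFunc K) + 1)⁻¹ := by
        rw [← hbe, ← mul_assoc, e1, one_mul]
      have hmain : ((RatFunc.X : RatFunc K) + 1) * algebraMap (Polynomial K) (RatFunc K) q
          = RatFunc.X ^ n := by
        rw [h2, mul_comm ((RatFunc.X : RatFunc K) ^ n), ← mul_assoc,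
          mul_inv_cancel₀ hXadd, one_mul]
      have hpoly : (Polynomial.X + 1 : Polynomial K) * q = Polynomial.X ^ n := by
        apply inj
        rw [map_mul, map_add, map_one, RatFunc.algebraMap_X, map_pow, RatFunc.algebraMap_X]
        exact hmain
      have heval := congrArg (Polynomial.eval (-1 : K)) hpoly
      rw [Polynomial.eval_mul, Polynomial.eval_pow, Polynomial.eval_add, Polynomial.eval_X,
        Polynomial.eval_one, neg_add_cancel, zero_mul] at heval
      exact pow_ne_zero n (neg_ne_zero.mpr (one_ne_zero : (1 : K) ≠ 0)) heval.symm
    · -- bigTri A = ⊤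
      apply my_bigTri_eq_top
      rintro ⟨z, hz0, hz⟩
      have hp : ∀ n : ℕ, ∃ p : Polynomial K,
          z * ((RatFunc.X : RatFunc K)⁻¹) ^ (n + 1) = algebraMap (Polynomial K) (RatFunc K) p :=
        fun n => my_polyExt_elim (hz _ (hA1 n))
      choose p hp using hp
      have key : ∀ n : ℕ, z = algebraMap (Polynomial K) (RatFunc K)
          (p n * Polynomial.X ^ (n + 1)) := by
        intro n
        rw [map_mul, map_pow, RatFunc.algebraMap_X, ← hp n, inv_pow, mul_assoc,
          inv_mul_cancel₀ (pow_ne_zero (n + 1) hXne), mul_one]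
      have hpn0 : ∀ n, p n ≠ 0 := by
        intro n h
        exact hz0 (by rw [key n, h, zero_mul, map_zero])
      set d := (p 0).natDegree with hd
      have heq : p (d + 1) * Polynomial.X ^ (d + 1 + 1) = p 0 * Polynomial.X ^ (0 + 1) :=
        inj ((key (d + 1)).symm.trans (key 0))
      have h1 := congrArg Polynomial.natDegree heq
      rw [Polynomial.natDegree_mul (hpn0 _) (pow_ne_zero _ Polynomial.X_ne_zero),
        Polynomial.natDegree_mul (hpn0 0) (pow_ne_zero _ Polynomial.X_ne_zero),
        Polynomial.natDegree_X_pow, Polynomial.natDegree_X_pow] at h1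
      omega
  refine ⟨?_, ?_, main⟩
  · intro B _
    exact iSup_le fun G => iSup_le fun hG => iSup_le fun _ => iSup_le fun hGB =>
      my_bigTri_mono star hstar hG hGB
  · intro hall
    obtain ⟨h1, h2, h3⟩ := main _ _ rfl rfl
    have hAne : (⨆ n : ℕ, ((RatFunc.X : RatFunc K)⁻¹ ^ (n + 1)) •
        (1 : Submodule (Polynomial D) (RatFunc K))) ≠ ⊥ := by
      intro hb
      have hx := hA1 0
      rw [hf] at hx
      rw [hb, Submodule.mem_bot] at hx
      rw [pow_one, inv_eq_zero] at hx
      exact hXne hx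
    have h4 := hall _ hAne
    rw [h3] at h4
    rw [h4] at h1
    exact absurd (top_le_iff.mp h1) h2.ne
end
end
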